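/- arXiv:1709.02766 — 6 statements merged into one kernel-verified Lean document; each statement's English description precedes it below -/
import Mathlib

section
/- If a finitely generated group is linear (embeds into GL_n over a field), then it is residually finite. -/
/-!
Malcev's argument. The entries of the images of finitely many generators and of their inverses
generate a finitely generated subring `A` of `K`, and `G` embeds into `GL n A`. Since `ℤ` is a
Jacobson ring, so is `A`, and as `A` is reduced every nonzero `a ∈ A` avoids some maximal ideal
`m`; by Zariski's lemma the residue field `A ⧸ m` is finite. Reducing modulo `m` an entry where
`g` differs from `1` gives a homomorphism to the finite group `GL n (A ⧸ m)` that does not kill `g`.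
-/

open Function

instance Int.instIsJacobsonRing : IsJacobsonRing ℤ := by
  rw [isJacobsonRing_iff_prime_eq]
  intro P hP
  rcases eq_or_ne P ⊥ with rfl | hP0
  · refine eq_bot_iff.mpr fun x hx => ?_
    rw [Ideal.mem_bot]
    -- `x * x + 1` is a unit of `ℤ` only for `x = 0`
    rcases Int.isUnit_iff.mp (Ideal.mem_jacobson_bot.mp hx x) with h | h
    · exact mul_self_eq_zero.mp (by linarith)
    · nlinarith [mul_self_nonneg x]
  · have := hP.isMaximal hP0
    exact Ideal.jacobson_eq_self_of_isMaximal

theorem finite_of_finiteType_int (F : Type*) [Field F] [Algebra.FiniteType ℤ F] : Finite F := by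
  have : Module.Finite ℤ F := finite_of_finite_type_of_isJacobsonRing ℤ F
  have hchar : ringChar F ≠ 0 := by
    intro h0
    have : CharP F 0 := h0 ▸ ringChar.charP F
    have := CharP.charP_to_charZero F
    have : Algebra.IsIntegral ℤ F := Algebra.IsIntegral.of_finite ℤ F
    exact Int.not_isField
      (isField_of_isIntegral_of_isField (algebraMap ℤ F).injective_int (Field.toIsField F))
  refine Module.finite_of_fg_torsion F fun x =>
    ⟨⟨ringChar F, mem_nonZeroDivisors_of_ne_zero (by exact_mod_cast hchar)⟩, ?_⟩
  simp [zsmul_eq_mul]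

theorem exists_isMaximal_finite_quotient_notMem {A : Type*} [CommRing A] [IsReduced A]
    [Algebra.FiniteType ℤ A] {a : A} (ha : a ≠ 0) :
    ∃ m : Ideal A, m.IsMaximal ∧ Finite (A ⧸ m) ∧ a ∉ m := by
  have : IsJacobsonRing A := isJacobsonRing_of_finiteType (A := ℤ)
  have hjac : a ∉ (⊥ : Ideal A).jacobson := by
    rwa [IsJacobsonRing.out' ⊥ Ideal.isRadical_bot, Ideal.mem_bot]
  simp only [Ideal.jacobson, Ideal.mem_sInf, not_forall] at hjac
  obtain ⟨m, ⟨-, hm⟩, ham⟩ := hjac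
  let _ : Field (A ⧸ m) := Ideal.Quotient.field m
  have : Algebra.FiniteType ℤ (A ⧸ m) :=
    .of_surjective (Ideal.Quotient.mkₐ ℤ m) (Ideal.Quotient.mkₐ_surjective ℤ m)
  -- the `Algebra ℤ` structures of the ring `A ⧸ m` and of the field `A ⧸ m` agree only up to
  -- unfolding, so the instance is passed by hand
  exact ⟨m, hm, @finite_of_finiteType_int _ _ this, ham⟩

theorem Group.ResiduallyFinite.of_injective {G G' : Type*} [Group G] [Group G']
    [Group.ResiduallyFinite G'] {f : G →* G'} (hf : Injective f) : Group.ResiduallyFinite G := by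
  refine residuallyFinite_iff_exists_finiteIndexNormalSubgroup.mpr fun g hg => ?_
  obtain ⟨K, hK⟩ := exists_finiteIndexNormalSubgroup_notMem (f g) ((map_ne_one_iff f hf).mpr hg)
  exact ⟨K.comap f, hK⟩

theorem Group.ResiduallyFinite.exists_finite_monoidHom.{v} {G : Type*} [Group G]
    [Group.ResiduallyFinite G] {g : G} (hg : g ≠ 1) :
    ∃ (H : Type v) (_ : Group H) (_ : Finite H) (φ : G →* H), φ g ≠ 1 := by
  obtain ⟨K, hK⟩ := exists_finiteIndexNormalSubgroup_notMem g hg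
  refine ⟨Shrink.{v} (G ⧸ K.toSubgroup), inferInstance, inferInstance,
    Shrink.mulEquiv.symm.toMonoidHom.comp (QuotientGroup.mk' K.toSubgroup), ?_⟩
  exact (map_ne_one_iff _ Shrink.mulEquiv.symm.injective).mpr
    (mt (QuotientGroup.eq_one_iff g).mp hK)

namespace Matrix.GeneralLinearGroup

variable {n K : Type*} [Fintype n] [DecidableEq n] [CommRing K]

theorem map_injective {R : Type*} [CommRing R] {f : R →+* K} (hf : Injective f) :
    Injective (map (n := n) f) :=
  fun _ _ h => Units.ext (Matrix.map_injective hf (congrArg Units.val h))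

instance residuallyFinite {A : Type*} [CommRing A] [IsReduced A] [Algebra.FiniteType ℤ A] :
    Group.ResiduallyFinite (GL n A) := by
  refine Group.residuallyFinite_of_forall_exists_finite_monoidHom fun u hu => ?_
  obtain ⟨i, j, hij⟩ : ∃ i j, u i j ≠ (1 : Matrix n n A) i j := by
    by_contra! h
    exact hu (Units.ext (Matrix.ext h))
  obtain ⟨m, -, hfin, hm⟩ := exists_isMaximal_finite_quotient_notMem (sub_ne_zero.mpr hij)
  refine ⟨GL n (A ⧸ m), inferInstance, inferInstance, map (Ideal.Quotient.mk m),
    fun h => hm (Ideal.Quotient.eq.mp ?_)⟩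
  rw [← GeneralLinearGroup.map_apply, h]
  simp [Matrix.one_apply, apply_ite (Ideal.Quotient.mk m)]

theorem mem_range_map_val {R : Type*} [CommRing R] [Algebra R K] {A : Subalgebra R K}
    {u : GL n K} (hu : ∀ i j, u i j ∈ A) (hu' : ∀ i j, u⁻¹ i j ∈ A) :
    u ∈ (map A.val.toRingHom).range := by
  let M : Matrix n n A := Matrix.of fun i j => ⟨u i j, hu i j⟩
  let N : Matrix n n A := Matrix.of fun i j => ⟨u⁻¹ i j, hu' i j⟩
  have hMN : M * N = 1 := Matrix.map_injective Subtype.val_injective <| by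
    change (M * N).map A.val.toRingHom = (1 : Matrix n n A).map A.val.toRingHom
    rw [Matrix.map_mul, Matrix.map_one _ (map_zero _) (map_one _)]
    exact u.mul_inv
  have hNM : N * M = 1 := Matrix.map_injective Subtype.val_injective <| by
    change (N * M).map A.val.toRingHom = (1 : Matrix n n A).map A.val.toRingHom
    rw [Matrix.map_mul, Matrix.map_one _ (map_zero _) (map_one _)]
    exact u.inv_mul
  exact ⟨⟨M, N, hMN, hNM⟩, Units.ext rfl⟩

theorem exists_fg_subalgebra_range_le {Γ : Subgroup (GL n K)} (hΓ : Γ.FG) :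
    ∃ A : Subalgebra ℤ K, A.FG ∧ Γ ≤ (map A.val.toRingHom).range := by
  obtain ⟨S, rfl⟩ := hΓ
  let T : Set K := ⋃ s ∈ S,
    (Set.range fun p : n × n => s p.1 p.2) ∪ Set.range fun p : n × n => s⁻¹ p.1 p.2
  have hT : T.Finite :=
    S.finite_toSet.biUnion fun _ _ => (Set.finite_range _).union (Set.finite_range _)
  refine ⟨Algebra.adjoin ℤ T, Subalgebra.fg_def.mpr ⟨T, hT, rfl⟩,
    (Subgroup.closure_le _).mpr fun s hs => mem_range_map_val
      (fun i j => Algebra.subset_adjoin (Set.mem_biUnion hs (Or.inl ⟨(i, j), rfl⟩)))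
      (fun i j => Algebra.subset_adjoin (Set.mem_biUnion hs (Or.inr ⟨(i, j), rfl⟩)))⟩

theorem exists_fg_subalgebra_lift {G : Type*} [Group G] [Group.FG G] (f : G →* GL n K) :
    ∃ (A : Subalgebra ℤ K) (f' : G →* GL n A), A.FG ∧ (map A.val.toRingHom).comp f' = f := by
  obtain ⟨A, hA, hle⟩ :=
    exists_fg_subalgebra_range_le ((Group.fg_iff_subgroup_fg f.range).mp inferInstance)
  let e :=
    MonoidHom.ofInjective (map_injective (n := n) (f := A.val.toRingHom) Subtype.val_injective)
  refine ⟨A, e.symm.toMonoidHom.comp (f.codRestrict _ fun x => hle ⟨x, rfl⟩), hA, ?_⟩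
  ext x : 1
  exact congrArg Subtype.val (e.apply_symm_apply _)

end Matrix.GeneralLinearGroup

/-- A finitely generated linear group (one that embeds into `GL n K` for some field `K`)
is residually finite. -/
theorem fg_linear_residually_finite {G : Type*} [Group G] (hfg : Group.FG G)
    (K : Type*) [Field K] (n : ℕ)
    (f : G →* GL (Fin n) K) (hf : Function.Injective f) :
    ∀ g : G, g ≠ 1 →
      ∃ (H : Type) (_ : Group H) (_ : Finite H) (φ : G →* H), φ g ≠ 1 := by
  intro g hg
  obtain ⟨A, f', hA, rfl⟩ := Matrix.GeneralLinearGroup.exists_fg_subalgebra_lift f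
  have : Algebra.FiniteType ℤ A := (Subalgebra.fg_iff_finiteType A).mp hA
  have : Group.ResiduallyFinite G :=
    .of_injective (f := f') (.of_comp (f := Matrix.GeneralLinearGroup.map A.val.toRingHom) hf)
  exact Group.ResiduallyFinite.exists_finite_monoidHom hg
end

section
/- Let Γ be a group, h ∈ Γ, S = h^Γ ∪ (h^{-1})^Γ the union of the conjugacy classes of h and h^{-1}, and for n ≥ 1 let [S]^n = { g_1⋯g_n : g_i ∈ S ∪ {1} }. If |[S]^D| ≤ D for some D ≥ 1, then [S]^D equals the normal subgroup of Γ generated by h. -/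
/-! With `T = S ∪ {1}`, the sets `[S]^n = T ^ n` form an increasing chain starting at
`T ^ 0 = {1}`. If `|T ^ D| ≤ D`, the chain cannot grow strictly at each of its first `D` steps,
so it becomes constant at some `j < D`; then `T ^ D * T ^ D = T ^ (2 * D) = T ^ D`. As `T` is
symmetric and contains `1`, this makes `T ^ D` the subgroup generated by `T`, and that subgroup
is the normal closure of `h` because `T` consists of `1`, the conjugates of `h` and their
inverses. -/

/-- `[S]^n`: the set of products of `n` elements, each taken from `S ∪ {1}`. -/
def setPow {G : Type*} [Group G] (S : Set G) (n : ℕ) : Set G :=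
  { g | ∃ f : Fin n → G, (∀ i, f i ∈ S ∪ {1}) ∧ g = (List.ofFn f).prod }

open Pointwise

lemma setPow_eq_pow {G : Type*} [Group G] (S : Set G) (n : ℕ) :
    setPow S n = (S ∪ {1}) ^ n := by
  ext g
  simp only [setPow, Set.mem_pow]
  constructor
  · rintro ⟨f, hf, rfl⟩
    exact ⟨fun i => ⟨f i, hf i⟩, rfl⟩
  · rintro ⟨f, rfl⟩
    exact ⟨fun i => f i, fun i => (f i).2, rfl⟩

lemma Monotone.exists_lt_eq_succ_of_ncard_le {α : Type*} {A : ℕ → Set α} {D : ℕ}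
    (hA : Monotone A) (h0 : (A 0).Nonempty) (hfin : (A D).Finite) (hcard : (A D).ncard ≤ D) :
    ∃ j < D, A (j + 1) = A j := by
  by_contra! hne
  have hgrow : ∀ k ≤ D, k + 1 ≤ (A k).ncard := by
    intro k hk
    induction k with
    | zero => exact (Set.ncard_pos (hfin.subset (hA (Nat.zero_le D)))).2 h0
    | succ k ih =>
      have hlt : (A k).ncard < (A (k + 1)).ncard :=
        Set.ncard_lt_ncard ((hA k.le_succ).ssubset_of_ne (hne k (by omega)).symm)
          (hfin.subset (hA hk))
      have := ih (by omega)
      omega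
  have := hgrow D le_rfl
  omega

lemma Set.pow_eq_of_pow_succ_eq {M : Type*} [Monoid M] {s : Set M} {j n : ℕ}
    (h : s ^ (j + 1) = s ^ j) (hjn : j ≤ n) : s ^ n = s ^ j := by
  induction n, hjn using Nat.le_induction with
  | base => rfl
  | succ n _ ih => rw [pow_succ, ih, ← pow_succ, h]

lemma Subgroup.coe_closure_eq_pow {G : Type*} [Group G] {s : Set G} {n : ℕ} (hs1 : 1 ∈ s)
    (hsinv : s⁻¹ = s) (hn : n ≠ 0) (hmul : s ^ n * s ^ n ⊆ s ^ n) :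
    (closure s : Set G) = s ^ n := by
  refine subset_antisymm (fun x hx => ?_) (pow_subset subset_closure)
  induction hx using closure_induction with
  | mem x hx => exact Set.subset_pow hs1 hn hx
  | one => exact Set.one_mem_pow hs1
  | mul x y _ _ hx hy => exact hmul (Set.mul_mem_mul hx hy)
  | inv x _ hx => rwa [← hsinv, inv_pow, Set.inv_mem_inv]

lemma IsConj.inv {G : Type*} [Group G] {a b : G} (hab : IsConj a b) : IsConj a⁻¹ b⁻¹ := by
  obtain ⟨c, rfl⟩ := isConj_iff.1 hab
  exact isConj_iff.2 ⟨c, by group⟩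

lemma conjugatesOf_inv {G : Type*} [Group G] (a : G) :
    conjugatesOf a⁻¹ = (conjugatesOf a)⁻¹ := by
  ext x
  simp only [conjugatesOf, Set.mem_inv, Set.mem_ofPred_eq]
  exact ⟨fun h => by simpa using h.inv, fun h => by simpa using h.inv⟩

lemma Subgroup.normalClosure_singleton {G : Type*} [Group G] (a : G) :
    normalClosure {a} = closure (conjugatesOf a) := by
  simp [normalClosure, Group.conjugatesOfSet]

theorem setPow_eq_normalClosure_general {G : Type*} [Group G] (h : G)
    (S : Set G) (hS : S = {x | IsConj h x} ∪ {x | IsConj h⁻¹ x})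
    (D : ℕ) (hfin : (setPow S D).Finite)
    (hcard : (setPow S D).ncard ≤ D) :
    setPow S D = (Subgroup.normalClosure {h} : Subgroup G) := by
  obtain rfl : S = conjugatesOf h ∪ (conjugatesOf h)⁻¹ := by rw [hS, ← conjugatesOf_inv]; rfl
  set T := conjugatesOf h ∪ (conjugatesOf h)⁻¹ ∪ {1}
  have hT1 : (1 : G) ∈ T := Or.inr rfl
  have hTinv : T⁻¹ = T := by
    simp only [T, Set.union_inv, inv_inv, Set.inv_singleton, inv_one,
      Set.union_comm (conjugatesOf h)⁻¹]
  have hclosure : Subgroup.normalClosure {h} = Subgroup.closure T := by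
    rw [Subgroup.normalClosure_singleton, Subgroup.closure_union_one, Subgroup.closure_union,
      Subgroup.closure_inv, sup_idem]
  rw [setPow_eq_pow] at hfin hcard ⊢
  obtain ⟨j, hjD, hj⟩ :=
    (Set.pow_right_monotone hT1).exists_lt_eq_succ_of_ncard_le (by simp) hfin hcard
  have hstable : T ^ D * T ^ D ⊆ T ^ D := by
    rw [← pow_add, Set.pow_eq_of_pow_succ_eq hj (by omega), Set.pow_eq_of_pow_succ_eq hj hjD.le]
  rw [hclosure, Subgroup.coe_closure_eq_pow hT1 hTinv (by omega) hstable]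

/-- If `S = h^Γ ∪ (h⁻¹)^Γ` and `|[S]^D| ≤ D` for some `D ≥ 1`, then `[S]^D` is the
normal subgroup of `Γ` generated by `h`. -/
theorem setPow_eq_normalClosure {G : Type*} [Group G] (h : G)
    (S : Set G) (hS : S = {x | IsConj h x} ∪ {x | IsConj h⁻¹ x})
    (D : ℕ) (hD : 1 ≤ D) (hfin : (setPow S D).Finite)
    (hcard : (setPow S D).ncard ≤ D) :
    setPow S D = (Subgroup.normalClosure {h} : Subgroup G) :=
  setPow_eq_normalClosure_general h S hS D hfin hcard
end

section
/- For n ≥ 3 and any matrix h in SL_n(Z) of the block form [[I_{n-2}, A],[0, B]] with A a nonzero (n-2)×2 integer matrix and B in SL_2(Z), there exist matrices A', B' of the same shapes such that the commutator [[I,A],[0,B]]·[[I,A'],[0,B']]·[[I,A],[0,B]]^{-1}·[[I,A'],[0,B']]^{-1} is a nonidentity matrix of the form [[I_{n-2}, A''],[0, I_2]]. -/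
/-! Block matrices `[[1, X], [0, Y]]` with `Y` invertible form an affine group in which the
translations `[[1, X], [0, 1]]` form an abelian normal subgroup. If `B ≠ 1`, the commutator of
`h` with a translation by `A'` is the translation by `A' (B⁻¹ - 1)`, nonzero for a suitable
matrix unit `A'`. If `B = 1`, `h` is the translation by `A ≠ 0`, and its commutator with
`[[1, 0], [0, B']]` is the translation by `A (1 - B'⁻¹)`, nonzero for a suitable transvection `B'`. -/

open Matrix

namespace Matrix

variable {m n R : Type*} [CommRing R] [DecidableEq n]

section Transvection

variable [Fintype n]

theorem inv_transvection {i j : n} (hij : i ≠ j) (c : R) :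
    (transvection i j c)⁻¹ = transvection i j (-c) :=
  inv_eq_right_inv <| by
    rw [transvection_mul_transvection_same _ _ hij, add_neg_cancel, transvection_zero]

theorem exists_det_eq_one_sub_mul_inv_ne_zero [Nontrivial n] {X : Matrix m n R} (hX : X ≠ 0) :
    ∃ B : Matrix n n R, B.det = 1 ∧ X - X * B⁻¹ ≠ 0 := by
  obtain ⟨k, i, hki⟩ : ∃ k i, X k i ≠ 0 := by simpa [← Matrix.ext_iff] using hX
  obtain ⟨j, hji⟩ := exists_ne i
  refine ⟨transvection i j (-1), det_transvection_of_ne _ _ hji.symm _, fun h => hki ?_⟩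
  simpa [inv_transvection hji.symm] using congr_fun₂ h k j

end Transvection

variable [DecidableEq m]

theorem fromBlocks_one_zero_one_eq_one_iff {X : Matrix m n R} :
    fromBlocks (1 : Matrix m m R) X 0 (1 : Matrix n n R) = 1 ↔ X = 0 := by
  rw [← fromBlocks_one, fromBlocks_inj]
  simp

variable [Fintype n]

theorem exists_mul_sub_ne_zero [Nonempty m] {C : Matrix n n R} (hC : C ≠ 1) :
    ∃ X : Matrix m n R, X * C - X ≠ 0 := by
  obtain ⟨i, j, hij⟩ : ∃ i j, C i j ≠ (1 : Matrix n n R) i j := by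
    simpa [← Matrix.ext_iff] using hC
  obtain ⟨k⟩ := ‹Nonempty m›
  refine ⟨single k i 1, fun h => hij ?_⟩
  simpa [sub_eq_zero, single_apply, one_apply] using congr_fun₂ h k j

variable [Fintype m]

theorem inv_fromBlocks_one (A : Matrix m n R) {B : Matrix n n R} (hB : IsUnit B.det) :
    (fromBlocks (1 : Matrix m m R) A 0 B)⁻¹ = fromBlocks (1 : Matrix m m R) (-(A * B⁻¹)) 0 B⁻¹ := by
  rw [inv_fromBlocks_zero₂₁_of_isUnit_iff _ _ _ (by simp [isUnit_iff_isUnit_det, hB])]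
  simp

theorem commutator_fromBlocks_one_translation (A A' : Matrix m n R) {B : Matrix n n R}
    (hB : IsUnit B.det) :
    fromBlocks (1 : Matrix m m R) A 0 B * fromBlocks (1 : Matrix m m R) A' 0 (1 : Matrix n n R) *
        (fromBlocks (1 : Matrix m m R) A 0 B)⁻¹ *
        (fromBlocks (1 : Matrix m m R) A' 0 (1 : Matrix n n R))⁻¹ =
      fromBlocks (1 : Matrix m m R) (A' * B⁻¹ - A') 0 (1 : Matrix n n R) := by
  rw [inv_fromBlocks_one _ hB, inv_fromBlocks_one _ (by simp)]
  simp only [fromBlocks_multiply, inv_one, Matrix.mul_one, Matrix.one_mul, Matrix.mul_zero,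
    Matrix.zero_mul, add_zero, zero_add, Matrix.add_mul, mul_nonsing_inv _ hB]
  congr 1
  abel

theorem commutator_translation_fromBlocks_one_zero (A : Matrix m n R) {B : Matrix n n R}
    (hB : IsUnit B.det) :
    fromBlocks (1 : Matrix m m R) A 0 (1 : Matrix n n R) * fromBlocks (1 : Matrix m m R) 0 0 B *
        (fromBlocks (1 : Matrix m m R) A 0 (1 : Matrix n n R))⁻¹ *
        (fromBlocks (1 : Matrix m m R) 0 0 B)⁻¹ =
      fromBlocks (1 : Matrix m m R) (A - A * B⁻¹) 0 (1 : Matrix n n R) := by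
  rw [inv_fromBlocks_one _ hB, inv_fromBlocks_one _ (by simp)]
  simp only [fromBlocks_multiply, inv_one, Matrix.mul_one, Matrix.one_mul, Matrix.mul_zero,
    Matrix.zero_mul, add_zero, zero_add, neg_zero, Matrix.add_mul, Matrix.neg_mul,
    Matrix.mul_assoc, mul_nonsing_inv _ hB]
  congr 1
  abel

end Matrix

theorem block_commutator_unipotent_general (m : ℕ)
    (A : Matrix (Fin m) (Fin 2) ℤ) (hA : A ≠ 0)
    (B : Matrix (Fin 2) (Fin 2) ℤ) (hB : B.det = 1) :
    ∃ (A' : Matrix (Fin m) (Fin 2) ℤ) (B' : Matrix (Fin 2) (Fin 2) ℤ),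
      B'.det = 1 ∧
      ∃ A'' : Matrix (Fin m) (Fin 2) ℤ,
        Matrix.fromBlocks (1 : Matrix (Fin m) (Fin m) ℤ) A 0 B * Matrix.fromBlocks (1 : Matrix (Fin m) (Fin m) ℤ) A' 0 B' *
            (Matrix.fromBlocks (1 : Matrix (Fin m) (Fin m) ℤ) A 0 B)⁻¹ * (Matrix.fromBlocks (1 : Matrix (Fin m) (Fin m) ℤ) A' 0 B')⁻¹ =
          Matrix.fromBlocks (1 : Matrix (Fin m) (Fin m) ℤ) A'' 0 (1 : Matrix (Fin 2) (Fin 2) ℤ) ∧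
        Matrix.fromBlocks (1 : Matrix (Fin m) (Fin m) ℤ) A'' 0 (1 : Matrix (Fin 2) (Fin 2) ℤ) ≠ 1 := by
  by_cases hB1 : B = 1
  · subst hB1
    obtain ⟨B', hB', hAB'⟩ := exists_det_eq_one_sub_mul_inv_ne_zero hA
    exact ⟨0, B', hB', _, commutator_translation_fromBlocks_one_zero A (by simp [hB']),
      fromBlocks_one_zero_one_eq_one_iff.not.mpr hAB'⟩
  · have hBu : IsUnit B.det := by simp [hB]
    obtain ⟨k, -⟩ := Function.ne_iff.mp hA
    have : Nonempty (Fin m) := ⟨k⟩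
    have hBinv : B⁻¹ ≠ 1 := fun h => hB1 (by rw [← nonsing_inv_nonsing_inv B hBu, h, inv_one])
    obtain ⟨A', hA'⟩ := exists_mul_sub_ne_zero (m := Fin m) hBinv
    exact ⟨A', 1, det_one, _, commutator_fromBlocks_one_translation A A' hBu,
      fromBlocks_one_zero_one_eq_one_iff.not.mpr hA'⟩

/-- For `n = m + 2 ≥ 3` and `h = [[I_m, A],[0,B]] ∈ SL_n(ℤ)` with `A ≠ 0`, there exist
`A'`, `B'` of the same shapes with `det B' = 1` such that the commutator of the two block
matrices is a nonidentity matrix of the form `[[I_m, A''],[0, I_2]]`. -/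
theorem block_commutator_unipotent (m : ℕ) (hm : 1 ≤ m)
    (A : Matrix (Fin m) (Fin 2) ℤ) (hA : A ≠ 0)
    (B : Matrix (Fin 2) (Fin 2) ℤ) (hB : B.det = 1) :
    ∃ (A' : Matrix (Fin m) (Fin 2) ℤ) (B' : Matrix (Fin 2) (Fin 2) ℤ),
      B'.det = 1 ∧
      ∃ A'' : Matrix (Fin m) (Fin 2) ℤ,
        Matrix.fromBlocks (1 : Matrix (Fin m) (Fin m) ℤ) A 0 B * Matrix.fromBlocks (1 : Matrix (Fin m) (Fin m) ℤ) A' 0 B' *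
            (Matrix.fromBlocks (1 : Matrix (Fin m) (Fin m) ℤ) A 0 B)⁻¹ * (Matrix.fromBlocks (1 : Matrix (Fin m) (Fin m) ℤ) A' 0 B')⁻¹ =
          Matrix.fromBlocks (1 : Matrix (Fin m) (Fin m) ℤ) A'' 0 (1 : Matrix (Fin 2) (Fin 2) ℤ) ∧
        Matrix.fromBlocks (1 : Matrix (Fin m) (Fin m) ℤ) A'' 0 (1 : Matrix (Fin 2) (Fin 2) ℤ) ≠ 1 :=
  block_commutator_unipotent_general m A hA B hB
end

section
/- Let G be a group with subgroups Δ and Γ such that G = Δ ⋊ Γ (Δ normal, G = ΔΓ, Δ ∩ Γ = 1), let b ∈ Γ, and suppose Z(C_G(b)) ∩ Γ = Z(C_Γ(b)). Then Z(C_G(b)) is the internal direct product of Z(C_G(b)) ∩ Δ and Z(C_Γ(b)). -/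
/-!
Write `z ∈ Z(C_G(b))` as `z = d * c` with `d ∈ Δ`, `c ∈ Γ`. Conjugation by an element of `Γ`
maps `Δ` and `Γ` to themselves, so by uniqueness of the decomposition an element of `Γ` that
commutes with `z` commutes with `d` and with `c`. Applied to `b` and to the elements of `C_Γ(b)`
this puts `c` in `Z(C_Γ(b)) = Z(C_G(b)) ∩ Γ`, hence `d = z * c⁻¹` lies in `Z(C_G(b)) ∩ Δ`.
-/

/-- The center of the centralizer of `b` taken inside a subset `S` of a group `G`:
`Z(C_S(b)) = { g ∈ S : g commutes with b, and g commutes with every element of S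
that commutes with b }`. -/
def zCent {G : Type*} [Group G] (S : Set G) (b : G) : Set G :=
  { g | g ∈ S ∧ g * b = b * g ∧ ∀ x ∈ S, x * b = b * x → g * x = x * g }

section

variable {G : Type*} [Group G] {Δ Γ : Subgroup G}

theorem Subgroup.eq_and_eq_of_mul_eq_mul (hdisj : Disjoint Δ Γ) {d d' c c' : G}
    (hd : d ∈ Δ) (hd' : d' ∈ Δ) (hc : c ∈ Γ) (hc' : c' ∈ Γ) (h : d * c = d' * c') :
    d = d' ∧ c = c' := by
  have := Subgroup.mul_injective_of_disjoint hdisj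
    (a₁ := (⟨d, hd⟩, ⟨c, hc⟩)) (a₂ := (⟨d', hd'⟩, ⟨c', hc'⟩)) h
  simpa only [Prod.mk.injEq, Subtype.mk.injEq] using this

theorem Subgroup.commute_and_commute_of_commute_mul (hΔ : Δ.Normal) (hdisj : Disjoint Δ Γ)
    {x d c : G} (hx : x ∈ Γ) (hd : d ∈ Δ) (hc : c ∈ Γ) (h : Commute x (d * c)) :
    Commute x d ∧ Commute x c := by
  have hconj : (x * d * x⁻¹) * (x * c * x⁻¹) = d * c := by
    rw [show x * d * x⁻¹ * (x * c * x⁻¹) = x * (d * c) * x⁻¹ by group, h.eq,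
      mul_inv_cancel_right]
  obtain ⟨hxd, hxc⟩ := Subgroup.eq_and_eq_of_mul_eq_mul hdisj (hΔ.conj_mem d hd x) hd
    (Γ.mul_mem (Γ.mul_mem hx hc) (Γ.inv_mem hx)) hc hconj
  exact ⟨mul_inv_eq_iff_eq_mul.mp hxd, mul_inv_eq_iff_eq_mul.mp hxc⟩

theorem mul_inv_mem_zCent {S : Subgroup G} {b g h : G} (hg : g ∈ zCent S b)
    (hh : h ∈ zCent S b) : g * h⁻¹ ∈ zCent S b :=
  ⟨S.mul_mem hg.1 (S.inv_mem hh.1), Commute.mul_left hg.2.1 (Commute.inv_left hh.2.1),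
    fun x hx hxb => Commute.mul_left (hg.2.2 x hx hxb) (Commute.inv_left (hh.2.2 x hx hxb))⟩

theorem right_mem_zCent_of_mul_mem_zCent_univ (hΔ : Δ.Normal) (hdisj : Disjoint Δ Γ)
    {b d c : G} (hb : b ∈ Γ) (hd : d ∈ Δ) (hc : c ∈ Γ) (hz : d * c ∈ zCent Set.univ b) :
    c ∈ zCent Γ b :=
  ⟨hc, (Subgroup.commute_and_commute_of_commute_mul hΔ hdisj hb hd hc hz.2.1.symm).2.symm,
    fun x hx hxb => (Subgroup.commute_and_commute_of_commute_mul hΔ hdisj hx hd hc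
      (hz.2.2 x trivial hxb).symm).2.symm⟩

end

/-- If `G = Δ ⋊ Γ`, `b ∈ Γ`, and `Z(C_G(b)) ∩ Γ = Z(C_Γ(b))`, then `Z(C_G(b))` is the
internal direct product of `Z(C_G(b)) ∩ Δ` and `Z(C_Γ(b))`: the two factors commute
elementwise and every element of `Z(C_G(b))` factors uniquely as a product. -/
theorem center_centralizer_direct_product {G : Type*} [Group G]
    (Δ Γ : Subgroup G) (hΔ : Δ.Normal)
    (hprod : ∀ g : G, ∃ d ∈ Δ, ∃ c ∈ Γ, g = d * c)
    (hint : Δ ⊓ Γ = ⊥)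
    (b : G) (hb : b ∈ Γ)
    (hZ : zCent Set.univ b ∩ (Γ : Set G) = zCent (Γ : Set G) b) :
    (∀ d ∈ zCent Set.univ b ∩ (Δ : Set G), ∀ c ∈ zCent (Γ : Set G) b, d * c = c * d) ∧
    ∀ z ∈ zCent Set.univ b,
      ∃! p : G × G,
        p.1 ∈ zCent Set.univ b ∩ (Δ : Set G) ∧ p.2 ∈ zCent (Γ : Set G) b ∧
          z = p.1 * p.2 := by
  have hdisj : Disjoint Δ Γ := disjoint_iff.mpr hint
  refine ⟨fun d ⟨⟨_, _, hdZ⟩, _⟩ c ⟨_, hcb, _⟩ => hdZ c trivial hcb, fun z hz => ?_⟩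
  obtain ⟨d, hd, c, hc, rfl⟩ := hprod z
  have hcZ : c ∈ zCent Γ b := right_mem_zCent_of_mul_mem_zCent_univ hΔ hdisj hb hd hc hz
  have hcZ' : c ∈ zCent Set.univ b := (hZ.ge hcZ).1
  have hdZ : d ∈ zCent Set.univ b := by
    simpa only [Subgroup.coe_top, mul_inv_cancel_right] using mul_inv_mem_zCent (S := ⊤) hz hcZ'
  refine ⟨(d, c), ⟨⟨hdZ, hd⟩, hcZ, rfl⟩, ?_⟩
  rintro ⟨d', c'⟩ ⟨⟨-, hd'⟩, ⟨hc', -⟩, he⟩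
  obtain ⟨rfl, rfl⟩ := Subgroup.eq_and_eq_of_mul_eq_mul hdisj hd' hd hc' hc he.symm
  rfl
end

section
/- Let G = C_25 ⋊_{ρ_6} Z and H = C_25 ⋊_{ρ_11} Z, where ρ_m : Z → Aut(C_25) sends 1 to the automorphism x ↦ x^m. Then G × Z and H × Z are isomorphic. -/
/-- The automorphism of the (multiplicatively written) cyclic group of order 25 sending
every element to its `m`-th power, for `m` coprime to 25. -/
def powAut (m : ℕ) (hm : Nat.Coprime m 25) : MulAut (Multiplicative (ZMod 25)) :=
  AddEquiv.toMultiplicative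
    (DistribMulAction.toAddAut ((ZMod 25)ˣ) (ZMod 25) (ZMod.unitOfCoprime m hm))

/-- The semidirect product `C_25 ⋊_{ρ_m} ℤ`, where `ρ_m(1)` is the `m`-th power map. -/
abbrev cyclicSemidirect (m : ℕ) (hm : Nat.Coprime m 25) :=
  Multiplicative (ZMod 25) ⋊[zpowersHom (MulAut (Multiplicative (ZMod 25))) (powAut m hm)]
    Multiplicative ℤ

/-!
An invertible integer matrix `[[a, b], [c, d]]` induces an automorphism
`(s, t) ↦ (s^a t^b, s^c t^d)` of `ℤ × ℤ`. Since `(N ⋊[φ] ℤ) × ℤ = N ⋊[φ ∘ fst] (ℤ × ℤ)`, this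
automorphism identifies `(N ⋊[φ] ℤ) × ℤ` with `(N ⋊[ψ] ℤ) × ℤ` as soon as `ψ(s^a t^b) = φ(s)`,
i.e. `ψ^a = φ` and `ψ^b = 1`. For `φ = ρ_6`, `ψ = ρ_11` the matrix `[[3, 5], [1, 2]]` works,
because `11^3 ≡ 6` and `11^5 ≡ 1 (mod 25)`.
-/

namespace SemidirectProduct

variable {N G H : Type*} [Group N] [Group G] [Group H]

def prodAssoc (φ : G →* MulAut N) :
    (N ⋊[φ] G) × H ≃* N ⋊[φ.comp (MonoidHom.fst G H)] (G × H) where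
  toFun x := ⟨x.1.left, (x.1.right, x.2)⟩
  invFun x := (⟨x.left, x.right.1⟩, x.right.2)
  left_inv _ := rfl
  right_inv _ := rfl
  map_mul' _ _ := rfl

end SemidirectProduct

namespace MulEquiv

variable {G : Type*} [CommGroup G]

def prodUnimodular (a b c d : ℤ) (h : a * d - b * c = 1) : G × G ≃* G × G where
  toFun x := (x.1 ^ a * x.2 ^ b, x.1 ^ c * x.2 ^ d)
  invFun x := (x.1 ^ d * x.2 ^ (-b), x.1 ^ (-c) * x.2 ^ a)
  left_inv x := by
    refine Prod.ext (Additive.ofMul.injective ?_) (Additive.ofMul.injective ?_) <;>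
      simp only [ofMul_mul, ofMul_zpow]
    · linear_combination (norm := module) h • Additive.ofMul x.1
    · linear_combination (norm := module) h • Additive.ofMul x.2
  right_inv x := by
    refine Prod.ext (Additive.ofMul.injective ?_) (Additive.ofMul.injective ?_) <;>
      simp only [ofMul_mul, ofMul_zpow]
    · linear_combination (norm := module) h • Additive.ofMul x.1
    · linear_combination (norm := module) h • Additive.ofMul x.2
  map_mul' x y := by
    simp only [Prod.fst_mul, Prod.snd_mul, mul_zpow, Prod.mk_mul_mk]
    ext <;> simp only <;> ac_rfl

end MulEquiv

namespace SemidirectProduct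

variable {N G : Type*} [Group N] [CommGroup G]

def prodEquivOfUnimodular (φ ψ : G →* MulAut N) (a b c d : ℤ) (hdet : a * d - b * c = 1)
    (ha : ∀ g, ψ (g ^ a) = φ g) (hb : ∀ g, ψ (g ^ b) = 1) :
    (N ⋊[φ] G) × G ≃* (N ⋊[ψ] G) × G :=
  (prodAssoc φ).trans <|
    (congr (MulEquiv.refl N) (MulEquiv.prodUnimodular a b c d hdet) fun ⟨s, t⟩ => by
        ext n
        change φ s n = ψ (s ^ a * t ^ b) n
        rw [map_mul, ha, hb, mul_one]).trans
      (prodAssoc ψ).symm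

end SemidirectProduct

lemma zpowersHom_zpow {M : Type*} [Group M] (x : M) (k : ℤ) (g : Multiplicative ℤ) :
    zpowersHom M x (g ^ k) = zpowersHom M (x ^ k) g := by
  simp [← zpow_mul]

lemma powAut_apply (m : ℕ) (hm : Nat.Coprime m 25) (x : Multiplicative (ZMod 25)) :
    powAut m hm x = Multiplicative.ofAdd (m * x.toAdd) := rfl

lemma powAut_pow (m : ℕ) (hm : Nat.Coprime m 25) (k : ℕ) :
    powAut m hm ^ k = powAut (m ^ k) (hm.pow_left k) := by
  induction k with
  | zero => ext x; simp [powAut_apply]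
  | succ k ih => ext x; simp [pow_succ, powAut_apply, ih, mul_assoc]

lemma powAut_eq_of_modEq {m n : ℕ} (hm : Nat.Coprime m 25) (hn : Nat.Coprime n 25)
    (h : m ≡ n [MOD 25]) : powAut m hm = powAut n hn := by
  ext x
  simp [powAut_apply, (ZMod.natCast_eq_natCast_iff m n 25).2 h]

lemma powAut_one : powAut 1 (Nat.coprime_one_left 25) = 1 := by
  ext x
  simp [powAut_apply]

/-- `(C_25 ⋊_{ρ_6} ℤ) × ℤ` and `(C_25 ⋊_{ρ_11} ℤ) × ℤ` are isomorphic. -/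
theorem semidirect_times_Z_iso :
    Nonempty ((cyclicSemidirect 6 (by decide)) × Multiplicative ℤ ≃*
      (cyclicSemidirect 11 (by decide)) × Multiplicative ℤ) := by
  have h_cube : powAut 11 (by decide) ^ 3 = powAut 6 (by decide) := by
    rw [powAut_pow]
    exact powAut_eq_of_modEq _ _ (by decide)
  have h_fifth : powAut 11 (by decide) ^ 5 = 1 := by
    rw [powAut_pow, ← powAut_one]
    exact powAut_eq_of_modEq _ _ (by decide)
  refine ⟨SemidirectProduct.prodEquivOfUnimodular _ _ 3 5 1 2 (by norm_num) (fun g => ?_)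
    (fun g => ?_)⟩
  · rw [zpowersHom_zpow, zpow_ofNat, h_cube]
  · rw [zpowersHom_zpow, zpow_ofNat, h_fifth, zpowersHom_apply, one_zpow]
end

section
/- Let M be a finite group all of whose automorphisms are inner, and let H_1 = M × Z. If H_2 is any group with H_1 × Z ≅ H_2 × Z, then H_1 ≅ H_2. -/
/-!
Torsion elements of `(M × ℤ) × ℤ` are exactly `M`, so an isomorphism with `H₂ × ℤ` identifies
`M` with the torsion elements of `H₂`, which therefore form the kernel of
`H₂ → (H₂ × ℤ) / torsion ≅ ℤ × ℤ`. The image `A` of this map satisfies `A × ℤ ≅ ℤ × ℤ`, so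
`A ≅ ℤ` by a rank count, and `H₂` is an extension of `ℤ` by `M`. Such an extension splits, and
since conjugation by a lift of `1 ∈ ℤ` acts on `M` by an inner automorphism, the lift can be
corrected by an element of `M` to commute with `M`, giving `H₂ ≅ M × ℤ`.
-/

open Function Multiplicative

local notation "ℤₘ" => Multiplicative ℤ

theorem nonempty_addEquiv_int_of_prod_int {A : Type*} [AddCommGroup A] (e : A × ℤ ≃+ ℤ × ℤ) :
    Nonempty (A ≃+ ℤ) := by
  have : IsAddTorsionFree A :=
    (e.injective.comp (Prod.mk_left_injective 0)).isAddTorsionFree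
      (e.toAddMonoidHom.comp (AddMonoidHom.inl A ℤ))
  have : Module.Finite ℤ A :=
    .of_surjective ((LinearMap.fst ℤ A ℤ).comp e.symm.toIntLinearEquiv.toLinearMap)
      (Prod.fst_surjective.comp e.symm.surjective)
  have hrank : Module.finrank ℤ A + 1 = 2 := by
    simpa [Module.finrank_prod] using e.toIntLinearEquiv.finrank_eq
  obtain ⟨f⟩ := Module.nonempty_linearEquiv_of_finrank_eq_one (R := ℤ) (M := A) (by omega)
  exact ⟨f.symm.toAddEquiv⟩

theorem nonempty_mulEquiv_multiplicative_int_of_prod {A : Type*} [CommGroup A]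
    (e : A × ℤₘ ≃* ℤₘ × ℤₘ) : Nonempty (A ≃* ℤₘ) := by
  obtain ⟨f⟩ := nonempty_addEquiv_int_of_prod_int
    (((AddEquiv.prodAdditive _ _).symm.trans e.toAdditive).trans (AddEquiv.prodAdditive _ _))
  exact ⟨AddEquiv.toMultiplicativeRight f⟩

theorem exists_surjective_ker_eq_of_prod {G : Type*} [Group G]
    (p : G × ℤₘ →* ℤₘ × ℤₘ) (hp : Surjective p) (hker : ∀ x, p x = 1 → x.2 = 1) :
    ∃ π : G →* ℤₘ, Surjective π ∧ π.ker = (p.comp (.inl G _)).ker := by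
  set g := p.comp (.inl G ℤₘ)
  have hsplit : ∀ x : G × ℤₘ, g x.1 * p (1, x.2) = p x := fun x => by
    simp [g, ← map_mul]
  let ψ : g.range × ℤₘ →* ℤₘ × ℤₘ := g.range.subtype.coprod (p.comp (.inr G _))
  have hψ : Bijective ψ := by
    refine ⟨(injective_iff_map_eq_one ψ).2 ?_, fun w => ?_⟩
    · rintro ⟨⟨_, h, rfl⟩, n⟩ hx
      have hn : n = 1 := hker (h, n) ((hsplit (h, n)).symm.trans hx)
      subst hn
      simpa [ψ, Prod.mk_one_one, Subtype.ext_iff] using hx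
    · obtain ⟨x, rfl⟩ := hp w
      exact ⟨(⟨g x.1, x.1, rfl⟩, x.2), hsplit x⟩
  obtain ⟨e⟩ := nonempty_mulEquiv_multiplicative_int_of_prod (MulEquiv.ofBijective ψ hψ)
  refine ⟨e.toMonoidHom.comp g.rangeRestrict, e.surjective.comp g.rangeRestrict_surjective, ?_⟩
  rw [MonoidHom.ker_comp_of_injective _ _ e.injective, MonoidHom.ker_rangeRestrict]

section Splitting

variable {M G : Type*} [Group M] [Group G] {j : M →* G}

theorem exists_commute_mul_of_range_normal
    (hinn : ∀ f : MulAut M, ∃ m : M, ∀ x : M, f x = m * x * m⁻¹) (hj : Injective j)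
    [j.range.Normal] (z : G) :
    ∃ m : M, ∀ x : M, Commute (j m * z) (j x) := by
  let e := MonoidHom.ofInjective hj
  obtain ⟨m, hm⟩ := hinn ((e.trans (MulAut.conjNormal z)).trans e.symm)
  refine ⟨m⁻¹, fun x => ?_⟩
  have hconj : z * j x * z⁻¹ = j m * j x * (j m)⁻¹ := by
    simpa [e, MonoidHom.ofInjective_apply] using congrArg j (hm x)
  rw [Commute, SemiconjBy, map_inv]
  calc (j m)⁻¹ * z * j x = (j m)⁻¹ * (z * j x * z⁻¹) * z := by group
    _ = j x * ((j m)⁻¹ * z) := by rw [hconj]; group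

theorem nonempty_mulEquiv_prod_of_range_eq_ker
    (hinn : ∀ f : MulAut M, ∃ m : M, ∀ x : M, f x = m * x * m⁻¹) (hj : Injective j)
    {π : G →* ℤₘ} (hπ : Surjective π) (hexact : j.range = π.ker) : Nonempty (M × ℤₘ ≃* G) := by
  have : j.range.Normal := hexact ▸ π.normal_ker
  obtain ⟨z, hz⟩ := hπ (ofAdd 1)
  obtain ⟨m, hm⟩ := exists_commute_mul_of_range_normal hinn hj z
  set u := j m * z
  have hπj : ∀ x, π (j x) = 1 := fun x => by rw [← MonoidHom.mem_ker, ← hexact]; exact ⟨x, rfl⟩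
  have hπu : ∀ n : ℤ, π (u ^ n) = ofAdd n := fun n => by
    simp [u, hπj, hz, ← ofAdd_zsmul]
  let Φ := j.noncommCoprod (zpowersHom G u) fun x n => (hm x).symm.zpow_right n.toAdd
  have hΦ : ∀ x n, Φ (x, n) = j x * u ^ n.toAdd := fun _ _ => rfl
  refine ⟨MulEquiv.ofBijective Φ ⟨(injective_iff_map_eq_one Φ).2 ?_, fun g => ?_⟩⟩
  · rintro ⟨x, n⟩ h
    have hn : n = 1 := by simpa [hΦ, hπj, hπu] using congrArg π h
    subst hn
    simpa [hΦ, hj.eq_iff' (map_one j)] using h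
  · obtain ⟨x, hx⟩ : g * u ^ (-(π g).toAdd) ∈ j.range := by
      rw [hexact, MonoidHom.mem_ker, map_mul, hπu]; simp
    exact ⟨(x, π g), by simp [hΦ, hx]⟩

end Splitting

section Torsion

variable {M H : Type*} [Group M] [Group H]

theorem isOfFinOrder_iff_prodMap_snd_eq_one (hM : IsMulTorsion M) (x : (M × ℤₘ) × ℤₘ) :
    IsOfFinOrder x ↔ (MonoidHom.snd M ℤₘ).prodMap (MonoidHom.id ℤₘ) x = 1 := by
  simp [IsOfFinOrder.prod_iff, isOfFinOrder_iff_eq_one, hM x.1.1, Prod.ext_iff]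

namespace MulEquiv

variable (φ : (M × ℤₘ) × ℤₘ ≃* H × ℤₘ)

def freePart : H × ℤₘ →* ℤₘ × ℤₘ :=
  ((MonoidHom.snd M ℤₘ).prodMap (MonoidHom.id ℤₘ)).comp φ.symm.toMonoidHom

def torsionEmbedding : M →* H :=
  (MonoidHom.fst H ℤₘ).comp (φ.toMonoidHom.comp ((MonoidHom.inl _ ℤₘ).comp (MonoidHom.inl M ℤₘ)))

theorem freePart_surjective : Surjective φ.freePart :=
  fun w => ⟨φ ((1, w.1), w.2), by simp [freePart]⟩

variable {φ}

theorem freePart_eq_one_iff (hM : IsMulTorsion M) (y : H × ℤₘ) :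
    φ.freePart y = 1 ↔ IsOfFinOrder y := by
  rw [freePart, MonoidHom.comp_apply, ← isOfFinOrder_iff_prodMap_snd_eq_one hM]
  exact φ.symm.injective.isOfFinOrder_iff (f := φ.symm.toMonoidHom)

theorem snd_eq_one_of_freePart_eq_one (hM : IsMulTorsion M) {y : H × ℤₘ}
    (hy : φ.freePart y = 1) : y.2 = 1 :=
  (isOfFinOrder_iff_eq_one _).1 ((freePart_eq_one_iff hM y).1 hy).snd

theorem apply_inl_inl (hM : IsMulTorsion M) (m : M) :
    φ ((m, 1), 1) = (φ.torsionEmbedding m, 1) := by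
  refine Prod.ext rfl (snd_eq_one_of_freePart_eq_one (φ := φ) hM ?_)
  simp [freePart]

theorem torsionEmbedding_injective (hM : IsMulTorsion M) : Injective φ.torsionEmbedding := by
  intro m m' h
  have : φ ((m, 1), 1) = φ ((m', 1), 1) := by rw [apply_inl_inl hM, apply_inl_inl hM, h]
  simpa using φ.injective this

theorem range_torsionEmbedding (hM : IsMulTorsion M) :
    φ.torsionEmbedding.range = (φ.freePart.comp (.inl H ℤₘ)).ker := by
  ext h
  constructor
  · rintro ⟨m, rfl⟩
    simp [← apply_inl_inl hM, freePart]
  · intro hh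
    set x := φ.symm (h, 1)
    have hx : x = ((x.1.1, 1), 1) := by
      simpa [freePart, Prod.ext_iff] using hh
    have hφx : φ ((x.1.1, 1), 1) = (h, 1) := by rw [← hx]; exact φ.apply_symm_apply _
    rw [apply_inl_inl hM] at hφx
    exact ⟨x.1.1, congrArg Prod.fst hφx⟩

end MulEquiv

end Torsion

/-- If `M` is a finite group all of whose automorphisms are inner and `H₁ = M × ℤ`,
then `H₁ × ℤ ≅ H₂ × ℤ` implies `H₁ ≅ H₂`. -/
theorem cancel_Z_factor {M : Type*} [Group M] [Finite M]
    (hinn : ∀ f : MulAut M, ∃ m : M, ∀ x : M, f x = m * x * m⁻¹)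
    (H₂ : Type*) [Group H₂]
    (hiso : Nonempty ((M × Multiplicative ℤ) × Multiplicative ℤ ≃* H₂ × Multiplicative ℤ)) :
    Nonempty (M × Multiplicative ℤ ≃* H₂) := by
  obtain ⟨φ⟩ := hiso
  have hM : IsMulTorsion M := isMulTorsion_of_finite
  obtain ⟨π, hπ, hker⟩ := exists_surjective_ker_eq_of_prod φ.freePart φ.freePart_surjective
    fun _ => MulEquiv.snd_eq_one_of_freePart_eq_one hM
  exact nonempty_mulEquiv_prod_of_range_eq_ker hinn (MulEquiv.torsionEmbedding_injective hM) hπ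
    ((MulEquiv.range_torsionEmbedding hM).trans hker.symm)
end
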